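/- Let K_n be the complete graph on n ≥ 2 vertices and let 1 < p < ∞. Then (1 + (n-1)/n^p)^{1/p} ≤ ‖M_{K_n}‖_p ≤ (1 + (n-1)/n)^{1/p}. In particular, 1 ≤ ‖M_{K_n}‖_p ≤ 2 for every n and every p > 1. -/

import Mathlib

open scoped Classical
open Finset

noncomputable section

variable {V : Type*} [Fintype V]

/-- metric ball of radius `r` centered at `v` in the graph `G` -/
def gBall (G : SimpleGraph V) (v : V) (r : ℕ) : Finset V :=
  Finset.univ.filter fun w => G.dist v w ≤ r

/-- Hardy–Littlewood maximal operator on the graph `G` -/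
def maxOp (G : SimpleGraph V) (f : V → ℝ) (v : V) : ℝ :=
  ⨆ k : Fin (Fintype.card V), (∑ w ∈ gBall G v k.1, |f w|) / ((gBall G v k.1).card : ℝ)

/-- ℓ^p (quasi)norm of a function on the vertices -/
def pNorm (p : ℝ) (f : V → ℝ) : ℝ := (∑ v, |f v| ^ p) ^ (1 / p)

/-- operator (quasi)norm of the maximal operator of `G` on ℓ^p -/
def opNorm (G : SimpleGraph V) (p : ℝ) : ℝ :=
  ⨆ f : {f : V → ℝ // f ≠ 0}, pNorm p (maxOp G f.1) / pNorm p f.1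

/-- weak ℓ^p norm -/
def wNorm (p : ℝ) (f : V → ℝ) : ℝ :=
  ⨆ t : {t : ℝ // 0 < t},
    t.1 * ((Finset.univ.filter fun v => t.1 < |f v|).card : ℝ) ^ (1 / p)

/-- weak-type operator norm of the maximal operator of `G` -/
def wOpNorm (G : SimpleGraph V) (p : ℝ) : ℝ :=
  ⨆ f : {f : V → ℝ // f ≠ 0}, wNorm p (maxOp G f.1) / pNorm p f.1

/-- maximal operator over all graphs on `V` isomorphic to `G` -/
def maxOpIso (G : SimpleGraph V) (f : V → ℝ) (j : V) : ℝ :=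
  ⨆ H : {H : SimpleGraph V // Nonempty (H ≃g G)}, maxOp H.1 f j

/-- operator norm of `maxOpIso` on ℓ^p -/
def opNormIso (G : SimpleGraph V) (p : ℝ) : ℝ :=
  ⨆ f : {f : V → ℝ // f ≠ 0}, pNorm p (maxOpIso G f.1) / pNorm p f.1

/-- Kronecker delta at `k` -/
def kdelta (k : V) : V → ℝ := fun j => if j = k then 1 else 0

/-- star graph on `Fin n` with center `0` -/
def starGraph (n : ℕ) : SimpleGraph (Fin n) :=
  SimpleGraph.fromRel fun i _ => i.1 = 0

/-- diameter of a graph -/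
def gDiam (G : SimpleGraph V) : ℕ :=
  Finset.univ.sup fun p : V × V => G.dist p.1 p.2

/-- dilation index of a graph -/
def dilIndex (G : SimpleGraph V) : ℝ :=
  ⨆ x : V, ⨆ r : {r : ℕ // r ≤ gDiam G},
    ((gBall G x (3 * r.1)).card : ℝ) / ((gBall G x r.1).card : ℝ)

/-- overlapping index of a graph -/
def overlapIndex (G : SimpleGraph V) : ℕ :=
  sInf { r : ℕ | ∀ J : Finset (V × ℕ), ∃ I ⊆ J,
    J.biUnion (fun j => gBall G j.1 j.2) = I.biUnion (fun i => gBall G i.1 i.2) ∧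
    ∀ v : V, (I.filter fun i => v ∈ gBall G i.1 i.2).card ≤ r }

/-!
On the complete graph every ball of positive radius is the whole vertex set, so
`M f (j) = max (|f j|, m)` with `m` the mean of `|f|`. Pick a vertex where `|f|` is at least
its mean: there `M f = |f|`; at each of the other `n - 1` vertices `(M f)^p ≤ |f|^p + m^p`,
and Jensen gives `m^p ≤ (1/n) ∑ |f|^p`. Hence `‖M f‖_p^p ≤ (1 + (n-1)/n) ‖f‖_p^p`.
For the lower bound, the Kronecker delta has `‖δ‖_p = 1` and `M δ` equal to `1` at its
support and `1/n` elsewhere.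
-/

lemma gBall_zero_of_connected {G : SimpleGraph V} (hG : G.Connected) (v : V) :
    gBall G v 0 = {v} := by
  ext w
  simp [gBall, hG.dist_eq_zero_iff, eq_comm]

lemma gBall_top_of_pos {k : ℕ} (hk : 0 < k) (v : V) : gBall (⊤ : SimpleGraph V) v k = univ := by
  ext w
  simp only [gBall, mem_filter, mem_univ, true_and, iff_true, SimpleGraph.dist_top]
  split_ifs <;> omega

lemma maxOp_top (hV : 1 < Fintype.card V) (f : V → ℝ) (v : V) :
    maxOp (⊤ : SimpleGraph V) f v = max |f v| ((∑ w, |f w|) / Fintype.card V) := by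
  have : Nonempty V := Fintype.card_pos_iff.1 (by omega)
  have hterm : ∀ k : Fin (Fintype.card V),
      (∑ w ∈ gBall ⊤ v k.1, |f w|) / ((gBall ⊤ v k.1).card : ℝ)
        = if k.1 = 0 then |f v| else (∑ w, |f w|) / Fintype.card V := by
    intro k
    split_ifs with hk
    · simp [hk, gBall_zero_of_connected SimpleGraph.connected_top]
    · simp [gBall_top_of_pos (Nat.pos_of_ne_zero hk)]
  unfold maxOp
  simp_rw [hterm]
  apply le_antisymm
  · exact ciSup_le fun k => by split_ifs <;> simp
  · refine max_le ?_ ?_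
    · exact le_ciSup_of_le (Finite.bddAbove_range _) ⟨0, by omega⟩ (by simp)
    · exact le_ciSup_of_le (Finite.bddAbove_range _) ⟨1, hV⟩ (by simp)

lemma rpow_max_le_add {a b p : ℝ} (ha : 0 ≤ a) (hb : 0 ≤ b) :
    max a b ^ p ≤ a ^ p + b ^ p := by
  rcases max_choice a b with h | h <;> rw [h]
  · linarith [Real.rpow_nonneg hb p]
  · linarith [Real.rpow_nonneg ha p]

section Mean

variable [Nonempty V]

lemma exists_mean_le (a : V → ℝ) : ∃ v, (∑ w, a w) / Fintype.card V ≤ a v := by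
  obtain ⟨v, -, hv⟩ := exists_le_of_sum_le (s := univ) (f := fun _ => (∑ w, a w) / Fintype.card V)
    (g := a) univ_nonempty (by simp [mul_div_cancel₀])
  exact ⟨v, hv⟩

lemma mean_rpow_le_mean_rpow {a : V → ℝ} (ha : ∀ v, 0 ≤ a v) {p : ℝ} (hp : 1 ≤ p) :
    ((∑ v, a v) / Fintype.card V) ^ p ≤ (∑ v, a v ^ p) / Fintype.card V := by
  have := Real.rpow_arith_mean_le_arith_mean_rpow univ (fun _ => (Fintype.card V : ℝ)⁻¹) a
    (fun _ _ => by positivity) (by simp) (fun v _ => ha v) hp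
  rwa [← mul_sum, ← mul_sum, inv_mul_eq_div, inv_mul_eq_div] at this

lemma sum_rpow_max_mean_le {a : V → ℝ} (ha : ∀ v, 0 ≤ a v) {p : ℝ} (hp : 1 ≤ p) :
    ∑ v, max (a v) ((∑ w, a w) / Fintype.card V) ^ p
      ≤ (1 + ((Fintype.card V : ℝ) - 1) / Fintype.card V) * ∑ v, a v ^ p := by
  set N : ℝ := (Fintype.card V : ℝ)
  set m := (∑ w, a w) / N
  have hm : 0 ≤ m := div_nonneg (sum_nonneg fun v _ => ha v) (Nat.cast_nonneg _)
  obtain ⟨v₀, hv₀⟩ := exists_mean_le a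
  have hpoint : ∀ v, max (a v) m ^ p ≤ a v ^ p + if v = v₀ then 0 else m ^ p := by
    intro v
    split_ifs with hv
    · rw [hv, max_eq_left hv₀, add_zero]
    · exact rpow_max_le_add (ha v) hm
  have hN : 1 ≤ N := by simp [N, Nat.one_le_iff_ne_zero]
  calc ∑ v, max (a v) m ^ p ≤ ∑ v, (a v ^ p + if v = v₀ then 0 else m ^ p) :=
        sum_le_sum fun v _ => hpoint v
    _ = ∑ v, a v ^ p + (N - 1) * m ^ p := by
        simp [sum_add_distrib, sum_ite, filter_ne', N, Nat.cast_pred Fintype.card_pos]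
    _ ≤ ∑ v, a v ^ p + (N - 1) * ((∑ v, a v ^ p) / N) := by
        gcongr
        exact mean_rpow_le_mean_rpow ha hp
    _ = (1 + (N - 1) / N) * ∑ v, a v ^ p := by ring

end Mean

section Norms

variable {p : ℝ}

lemma pNorm_pos {f : V → ℝ} (hf : f ≠ 0) : 0 < pNorm p f := by
  obtain ⟨v, hv⟩ := Function.ne_iff.1 hf
  refine Real.rpow_pos_of_pos (sum_pos' (fun w _ => by positivity) ⟨v, mem_univ v, ?_⟩) _
  exact Real.rpow_pos_of_pos (abs_pos.2 hv) p

lemma pNorm_le_rpow_mul_of_sum_rpow_le (hp : 0 < p) {C : ℝ} (hC : 0 ≤ C) {f g : V → ℝ}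
    (h : ∑ v, |g v| ^ p ≤ C * ∑ v, |f v| ^ p) : pNorm p g ≤ C ^ (1 / p) * pNorm p f := by
  unfold pNorm
  rw [← Real.mul_rpow hC (sum_nonneg fun v _ => by positivity)]
  exact Real.rpow_le_rpow (sum_nonneg fun v _ => by positivity) h (by positivity)

lemma pNorm_kdelta (hp : p ≠ 0) (k : V) : pNorm p (kdelta k) = 1 := by
  simp [pNorm, kdelta, apply_ite, Real.zero_rpow hp]

variable {G : SimpleGraph V} {C : ℝ}

lemma opNorm_le [Nonempty V] (h : ∀ f, pNorm p (maxOp G f) ≤ C * pNorm p f) : opNorm G p ≤ C :=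
  have : Nonempty {f : V → ℝ // f ≠ 0} := ⟨⟨1, one_ne_zero⟩⟩
  ciSup_le fun f => (div_le_iff₀ (pNorm_pos f.2)).2 (h f.1)

lemma div_le_opNorm (h : ∀ f, pNorm p (maxOp G f) ≤ C * pNorm p f) {f : V → ℝ} (hf : f ≠ 0) :
    pNorm p (maxOp G f) / pNorm p f ≤ opNorm G p :=
  le_ciSup (f := fun f : {f : V → ℝ // f ≠ 0} => pNorm p (maxOp G f.1) / pNorm p f.1)
    ⟨C, Set.forall_mem_range.2 fun f => (div_le_iff₀ (pNorm_pos f.2)).2 (h f.1)⟩ ⟨f, hf⟩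

end Norms

section CompleteGraph

variable {p : ℝ}

lemma pNorm_maxOp_top_le (hV : 1 < Fintype.card V) (hp : 1 ≤ p) (f : V → ℝ) :
    pNorm p (maxOp (⊤ : SimpleGraph V) f)
      ≤ (1 + ((Fintype.card V : ℝ) - 1) / Fintype.card V) ^ (1 / p) * pNorm p f := by
  have : Nonempty V := Fintype.card_pos_iff.1 (by omega)
  have hN : (1 : ℝ) ≤ Fintype.card V := by exact_mod_cast hV.le
  refine pNorm_le_rpow_mul_of_sum_rpow_le (by linarith) (by positivity) ?_
  simp only [maxOp_top hV, abs_of_nonneg (le_max_of_le_left (abs_nonneg _))]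
  exact sum_rpow_max_mean_le (fun v => abs_nonneg (f v)) hp

lemma maxOp_top_kdelta (hV : 1 < Fintype.card V) (k j : V) :
    maxOp (⊤ : SimpleGraph V) (kdelta k) j = if j = k then 1 else (Fintype.card V : ℝ)⁻¹ := by
  have hN : (1 : ℝ) ≤ Fintype.card V := by exact_mod_cast hV.le
  rw [maxOp_top hV]
  split_ifs with hj <;> simp [kdelta, hj, apply_ite, inv_le_one_of_one_le₀ hN]

lemma pNorm_maxOp_top_kdelta (hV : 1 < Fintype.card V) (k : V) :
    pNorm p (maxOp (⊤ : SimpleGraph V) (kdelta k))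
      = (1 + ((Fintype.card V : ℝ) - 1) / (Fintype.card V : ℝ) ^ p) ^ (1 / p) := by
  have hterm : ∀ j, |maxOp ⊤ (kdelta k) j| ^ p
      = if j = k then 1 else ((Fintype.card V : ℝ) ^ p)⁻¹ := by
    intro j
    split_ifs with hj <;> simp [maxOp_top_kdelta hV, hj, Real.inv_rpow]
  rw [pNorm, sum_congr rfl fun j _ => hterm j, sum_ite, filter_eq' univ k, filter_ne' univ k]
  simp [Nat.cast_pred (by omega : 0 < Fintype.card V), div_eq_mul_inv]

end CompleteGraph

/-- bounds for the ℓ^p norm of the maximal operator of the complete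
graph, for 1 < p < ∞. -/
theorem stmt6 (n : ℕ) (hn : 2 ≤ n) (p : ℝ) (hp : 1 < p) :
    (1 + ((n : ℝ) - 1) / (n : ℝ) ^ p) ^ (1 / p) ≤ opNorm (⊤ : SimpleGraph (Fin n)) p ∧
    opNorm (⊤ : SimpleGraph (Fin n)) p ≤ (1 + ((n : ℝ) - 1) / (n : ℝ)) ^ (1 / p) ∧
    1 ≤ opNorm (⊤ : SimpleGraph (Fin n)) p ∧
    opNorm (⊤ : SimpleGraph (Fin n)) p ≤ 2 := by
  have hV : 1 < Fintype.card (Fin n) := by rw [Fintype.card_fin]; omega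
  have : Nonempty (Fin n) := ⟨⟨0, by omega⟩⟩
  have hn1 : (1 : ℝ) ≤ n := by exact_mod_cast (by omega : 1 ≤ n)
  have hbound : ∀ f : Fin n → ℝ, pNorm p (maxOp ⊤ f)
      ≤ (1 + ((n : ℝ) - 1) / n) ^ (1 / p) * pNorm p f := by
    simpa using pNorm_maxOp_top_le hV hp.le
  have hlower : (1 + ((n : ℝ) - 1) / (n : ℝ) ^ p) ^ (1 / p)
      ≤ opNorm (⊤ : SimpleGraph (Fin n)) p := by
    have hδ : kdelta (⟨0, by omega⟩ : Fin n) ≠ 0 :=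
      Function.ne_iff.2 ⟨⟨0, by omega⟩, by simp [kdelta]⟩
    simpa [pNorm_kdelta (by positivity : p ≠ 0), pNorm_maxOp_top_kdelta hV] using
      div_le_opNorm hbound hδ
  have hupper := opNorm_le hbound
  have hone_le : (1 : ℝ) ≤ (1 + ((n : ℝ) - 1) / (n : ℝ) ^ p) ^ (1 / p) :=
    Real.one_le_rpow (le_add_of_nonneg_right (by positivity)) (by positivity)
  have hle_two : (1 + ((n : ℝ) - 1) / n) ^ (1 / p) ≤ 2 := by
    have hfrac : ((n : ℝ) - 1) / n ≤ 1 := div_le_one_of_le₀ (by linarith) (by positivity)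
    calc (1 + ((n : ℝ) - 1) / n) ^ (1 / p) ≤ 1 + ((n : ℝ) - 1) / n :=
          Real.rpow_le_self_of_one_le (le_add_of_nonneg_right (by positivity))
            ((div_le_one (by linarith)).2 hp.le)
      _ ≤ 2 := by linarith
  exact ⟨hlower, hupper, hone_le.trans hlower, hupper.trans hle_two⟩
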